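/- arXiv:0807.4337 — 5 statements merged into one kernel-verified Lean document; each statement's English description precedes it below -/
import Mathlib

section
/- Let π : [0,1] × [0,1] → ℝ be continuous and weakly consistent. Then, setting q = π(1,0), one has π(x,y) = q·x + (1−q)·y for all x, y ∈ [0,1]. -/
/-!
Weak consistency applied to the probability vectors `(a, 1 - a)` and `(a, c, 1 - a - c)` (and
the same for `y`) makes `π` additive: `π (a + c) (b + d) = π a b + π c d`. Hence
`π x y = π x 0 + π 0 y`, and each slice is a continuous function additive on `[0, 1]`, hence linear.
The two slopes are `π 1 0` and `π 0 1 = 1 - π 1 0`.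
-/

open Set Filter Topology

lemma map_natCast_mul_of_map_add {g : ℝ → ℝ}
    (hadd : ∀ a b : ℝ, 0 ≤ a → 0 ≤ b → a + b ≤ 1 → g (a + b) = g a + g b)
    {t : ℝ} (ht : 0 ≤ t) (k : ℕ) (hk : k * t ≤ 1) : g (k * t) = k * g t := by
  induction k with
  | zero => simpa using hadd 0 0 le_rfl le_rfl (by norm_num)
  | succ k ih =>
    push_cast at hk ⊢
    rw [add_one_mul, hadd _ _ (by positivity) ht (by linarith), ih (by linarith), add_one_mul]

lemma Icc_subset_closure_natCast_div :
    Icc (0 : ℝ) 1 ⊆ closure {x | ∃ k n : ℕ, 0 < n ∧ k ≤ n ∧ (k : ℝ) / n = x} := by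
  intro x hx
  refine mem_closure_of_tendsto
    ((tendsto_nat_floor_mul_div_atTop hx.1).comp tendsto_natCast_atTop_atTop) ?_
  filter_upwards [eventually_gt_atTop 0] with n hn
  exact ⟨_, n, hn, Nat.floor_le_of_le (mul_le_of_le_one_left n.cast_nonneg hx.2), rfl⟩

lemma eqOn_mul_apply_one_of_map_add {g : ℝ → ℝ} (hc : ContinuousOn g (Icc 0 1))
    (hadd : ∀ a b : ℝ, 0 ≤ a → 0 ≤ b → a + b ≤ 1 → g (a + b) = g a + g b) :
    EqOn g (fun x => x * g 1) (Icc 0 1) := by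
  have hfrac : EqOn g (fun x => x * g 1) {x | ∃ k n : ℕ, 0 < n ∧ k ≤ n ∧ (k : ℝ) / n = x} := by
    rintro _ ⟨k, n, hn, hkn, rfl⟩
    have hn' : (0 : ℝ) < n := Nat.cast_pos.mpr hn
    have hone : g 1 = n * g (1 / n) := by
      simpa [hn'.ne'] using map_natCast_mul_of_map_add hadd (one_div_nonneg.mpr hn'.le) n
    have hk : g (k * (1 / n)) = k * g (1 / n) :=
      map_natCast_mul_of_map_add hadd (one_div_nonneg.mpr hn'.le) k
        (by rw [mul_one_div, div_le_one hn']; exact_mod_cast hkn)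
    simp only [mul_one_div] at hk
    rw [hk, hone]
    field_simp
  refine hfrac.of_subset_closure hc (continuousOn_id.mul continuousOn_const) ?_
    Icc_subset_closure_natCast_div
  rintro _ ⟨k, n, hn, hkn, rfl⟩
  exact ⟨by positivity, div_le_one_of_le₀ (by exact_mod_cast hkn) n.cast_nonneg⟩

def WeaklyConsistent (π : ℝ → ℝ → ℝ) : Prop :=
  ∀ (n : ℕ) (x y : Fin n → ℝ), (∀ i, 0 ≤ x i) → (∑ i, x i = 1) → (∀ i, 0 ≤ y i) →
    (∑ i, y i = 1) → ∑ i, π (x i) (y i) = 1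

namespace WeaklyConsistent

variable {π : ℝ → ℝ → ℝ}

lemma apply_add_apply_one_sub (h : WeaklyConsistent π) {a b : ℝ} (ha₀ : 0 ≤ a) (ha₁ : a ≤ 1)
    (hb₀ : 0 ≤ b) (hb₁ : b ≤ 1) : π a b + π (1 - a) (1 - b) = 1 := by
  simpa [Fin.sum_univ_two] using h 2 ![a, 1 - a] ![b, 1 - b]
    (by intro i; fin_cases i <;> simp <;> linarith) (by simp [Fin.sum_univ_two])
    (by intro i; fin_cases i <;> simp <;> linarith) (by simp [Fin.sum_univ_two])

lemma apply_add_apply_add_apply_one_sub (h : WeaklyConsistent π) {a b c d : ℝ} (ha : 0 ≤ a)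
    (hb : 0 ≤ b) (hc : 0 ≤ c) (hd : 0 ≤ d) (hac : a + c ≤ 1) (hbd : b + d ≤ 1) :
    π a b + π c d + π (1 - a - c) (1 - b - d) = 1 := by
  simpa [Fin.sum_univ_three] using h 3 ![a, c, 1 - a - c] ![b, d, 1 - b - d]
    (by intro i; fin_cases i <;> simp <;> linarith) (by simp [Fin.sum_univ_three])
    (by intro i; fin_cases i <;> simp <;> linarith) (by simp [Fin.sum_univ_three])

lemma map_add (h : WeaklyConsistent π) {a b c d : ℝ} (ha : 0 ≤ a) (hb : 0 ≤ b) (hc : 0 ≤ c)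
    (hd : 0 ≤ d) (hac : a + c ≤ 1) (hbd : b + d ≤ 1) :
    π (a + c) (b + d) = π a b + π c d := by
  have h₃ := h.apply_add_apply_add_apply_one_sub ha hb hc hd hac hbd
  have h₂ := h.apply_add_apply_one_sub (add_nonneg ha hc) hac (add_nonneg hb hd) hbd
  rw [sub_add_eq_sub_sub, sub_add_eq_sub_sub] at h₂
  linarith

lemma apply_zero_one (h : WeaklyConsistent π) : π 0 1 = 1 - π 1 0 := by
  have := h.apply_add_apply_one_sub zero_le_one le_rfl le_rfl zero_le_one
  rw [sub_self, sub_zero] at this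
  linarith

end WeaklyConsistent

/-- If `π : [0,1] × [0,1] → ℝ` is continuous and weakly consistent,
then with `q = π 1 0` one has `π x y = q·x + (1−q)·y` on `[0,1] × [0,1]`. -/
theorem stmt_4 (π : ℝ → ℝ → ℝ)
    (hcont : ContinuousOn (fun p : ℝ × ℝ => π p.1 p.2)
      (Set.Icc (0:ℝ) 1 ×ˢ Set.Icc (0:ℝ) 1))
    (hWC : ∀ (n : ℕ) (x y : Fin n → ℝ),
      (∀ i, 0 ≤ x i) → (∑ i, x i = 1) → (∀ i, 0 ≤ y i) → (∑ i, y i = 1) →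
      ∑ i, π (x i) (y i) = 1) :
    ∀ x ∈ Set.Icc (0:ℝ) 1, ∀ y ∈ Set.Icc (0:ℝ) 1,
      π x y = π 1 0 * x + (1 - π 1 0) * y := by
  have hWC : WeaklyConsistent π := hWC
  have hx_slice : EqOn (π · 0) (· * π 1 0) (Icc 0 1) :=
    eqOn_mul_apply_one_of_map_add
      (hcont.comp (continuousOn_id.prodMk continuousOn_const) fun x hx => ⟨hx, by simp⟩)
      fun a b ha hb hab => by simpa using hWC.map_add ha le_rfl hb le_rfl hab (by norm_num)
  have hy_slice : EqOn (π 0 ·) (· * π 0 1) (Icc 0 1) :=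
    eqOn_mul_apply_one_of_map_add
      (hcont.comp (continuousOn_const.prodMk continuousOn_id) fun y hy => ⟨by simp, hy⟩)
      fun a b ha hb hab => by simpa using hWC.map_add le_rfl ha le_rfl hb (by norm_num) hab
  intro x hx y hy
  calc π x y = π x 0 + π 0 y := by
        simpa using hWC.map_add hx.1 le_rfl le_rfl hy.1 (by simpa using hx.2) (by simpa using hy.2)
    _ = x * π 1 0 + y * π 0 1 := congr_arg₂ (· + ·) (hx_slice hx) (hy_slice hy)
    _ = π 1 0 * x + (1 - π 1 0) * y := by rw [hWC.apply_zero_one]; ring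
end

section
/- Fix a real q > 0. For every finite index set A, every probability vector x = (x_i)_{i∈A}, and every probability vector y = (y_i)_{i∈A} with y_i > 0 for all i ∈ A, one has ∑_{i∈A} π_q(x_i, y_i) κ_q(y_i) ≥ ∑_{i∈A} x_i κ_q(x_i); that is, Φ_q(x,y) ≥ H_q(x), equivalently D_q(x,y) ≥ 0. -/
/-- The `q`-logarithm: `ln_q x = ln x` if `q = 1`, else `(x^(1−q) − 1)/(1−q)`. -/
noncomputable def qlog (q x : ℝ) : ℝ :=
  if q = 1 then Real.log x else (x ^ (1 - q) - 1) / (1 - q)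

/-- The coder `κ_q(y) = ln_q (1/y)`. -/
noncomputable def coder (q y : ℝ) : ℝ := qlog q (1 / y)

/-- The interaction `π_q(x,y) = q·x + (1−q)·y`. -/
noncomputable def inter (q x y : ℝ) : ℝ := q * x + (1 - q) * y

/-- The entropy `H_q(x) = ∑ i, x i · κ_q (x i)`, a term with `x i = 0`
contributing `0`. -/
noncomputable def entropy (q : ℝ) {n : ℕ} (x : Fin n → ℝ) : ℝ :=
  ∑ i, if x i = 0 then 0 else x i * coder q (x i)

/-- The complexity `Φ_q(x,y) = ∑ i, π_q (x i) (y i) · κ_q (y i)`. -/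
noncomputable def complexity (q : ℝ) {n : ℕ} (x y : Fin n → ℝ) : ℝ :=
  ∑ i, inter q (x i) (y i) * coder q (y i)

/-- The divergence `D_q(x,y) = Φ_q(x,y) − H_q(x)`. -/
noncomputable def diverg (q : ℝ) {n : ℕ} (x y : Fin n → ℝ) : ℝ :=
  complexity q x y - entropy q x

lemma coder_eq_aux (q y : ℝ) (hq : q ≠ 1) (hy : 0 < y) :
    coder q y = (y ^ (q - 1) - 1) / (1 - q) := by
  have h : (1 / y) ^ (1 - q) = y ^ (q - 1) := by
    rw [one_div, Real.inv_rpow hy.le, ← Real.rpow_neg hy.le, neg_sub]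
  simp only [coder, qlog, if_neg hq, h]

/-- Bernoulli (concave case): for `0 < q < 1`, `a ≥ 0`, `b > 0`. -/
lemma bern_lt (q a b : ℝ) (hq0 : 0 < q) (hq1 : q < 1) (ha : 0 ≤ a) (hb : 0 < b) :
    a ^ q ≤ q * a * b ^ (q - 1) + (1 - q) * b ^ q := by
  have hs : -1 ≤ a / b - 1 := by
    have : 0 ≤ a / b := div_nonneg ha hb.le
    linarith
  have h := rpow_one_add_le_one_add_mul_self hs hq0.le hq1.le
  rw [show 1 + (a / b - 1) = a / b by ring] at h
  have hbq : (0:ℝ) < b ^ q := Real.rpow_pos_of_pos hb q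
  have hdiv : (a / b) ^ q = a ^ q / b ^ q := Real.div_rpow ha hb.le q
  have hb1 : b ^ (q - 1) = b ^ q / b := by
    rw [Real.rpow_sub hb, Real.rpow_one]
  rw [hdiv, div_le_iff₀ hbq] at h
  rw [hb1]
  have hb' : b ≠ 0 := hb.ne'
  calc a ^ q ≤ (1 + q * (a / b - 1)) * b ^ q := h
    _ = q * a * (b ^ q / b) + (1 - q) * b ^ q := by field_simp; ring

/-- Bernoulli (convex case): for `1 < q`, `a ≥ 0`, `b > 0`. -/
lemma bern_gt (q a b : ℝ) (hq1 : 1 < q) (ha : 0 ≤ a) (hb : 0 < b) :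
    q * a * b ^ (q - 1) + (1 - q) * b ^ q ≤ a ^ q := by
  have hs : -1 ≤ a / b - 1 := by
    have : 0 ≤ a / b := div_nonneg ha hb.le
    linarith
  have h := one_add_mul_self_le_rpow_one_add hs hq1.le
  rw [show 1 + (a / b - 1) = a / b by ring] at h
  have hbq : (0:ℝ) < b ^ q := Real.rpow_pos_of_pos hb q
  have hdiv : (a / b) ^ q = a ^ q / b ^ q := Real.div_rpow ha hb.le q
  have hb1 : b ^ (q - 1) = b ^ q / b := by
    rw [Real.rpow_sub hb, Real.rpow_one]
  rw [hdiv, le_div_iff₀ hbq] at h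
  rw [hb1]
  have hb' : b ≠ 0 := hb.ne'
  calc q * a * (b ^ q / b) + (1 - q) * b ^ q
      = (1 + q * (a / b - 1)) * b ^ q := by field_simp; ring
    _ ≤ a ^ q := h

/-- Per-term key inequality. -/
lemma term_key (q a b : ℝ) (hq : 0 < q) (ha : 0 ≤ a) (hb : 0 < b) :
    a - b + (if a = 0 then 0 else a * coder q a) ≤ inter q a b * coder q b := by
  by_cases hq1 : q = 1
  · subst hq1
    simp only [inter, coder, qlog, if_pos rfl, ite_true, one_mul, sub_self, zero_mul, add_zero]
    rcases eq_or_lt_of_le ha with h0 | ha'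
    · subst h0
      simp
      linarith [hb]
    · rw [if_neg ha'.ne']
      have hlog : Real.log (b / a) ≤ b / a - 1 :=
        Real.log_le_sub_one_of_pos (div_pos hb ha')
      have h1 : Real.log (1 / a) = - Real.log a := by
        rw [one_div, Real.log_inv]
      have h2 : Real.log (1 / b) = - Real.log b := by
        rw [one_div, Real.log_inv]
      have h3 : Real.log (b / a) = Real.log b - Real.log a :=
        Real.log_div hb.ne' ha'.ne'
      have h4 : a * Real.log (b / a) ≤ a * (b / a - 1) :=
        mul_le_mul_of_nonneg_left hlog ha'.le
      have h5 : a * (b / a - 1) = b - a := by field_simp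
      rw [h1, h2]
      nlinarith [h4]
  · have hcb : coder q b = (b ^ (q - 1) - 1) / (1 - q) := coder_eq_aux q b hq1 hb
    rcases eq_or_lt_of_le ha with h0 | ha'
    · rw [if_pos h0.symm]
      rw [hcb, ← h0]
      have hq1' : (1:ℝ) - q ≠ 0 := by
        intro h; apply hq1; linarith
      have hkey : inter q 0 b * ((b ^ (q - 1) - 1) / (1 - q)) - (0 - b + 0)
          = (q * 0 * b ^ (q - 1) + (1 - q) * b ^ q - (0:ℝ) ^ q) / (1 - q) := by
        have h0q : (0:ℝ) ^ q = 0 := Real.zero_rpow hq.ne'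
        have hb1 : b * b ^ (q - 1) = b ^ q := by
          rw [Real.rpow_sub hb, Real.rpow_one]; field_simp
        simp only [inter, h0q]
        field_simp
        nlinarith [hb1]
      rw [← sub_nonneg, hkey]
      rcases lt_or_gt_of_ne hq1 with hlt | hgt
      · apply div_nonneg _ (by linarith)
        nlinarith [bern_lt q 0 b hq hlt le_rfl hb]
      · apply div_nonneg_of_nonpos _ (by linarith)
        nlinarith [bern_gt q 0 b hgt le_rfl hb]
    · rw [if_neg ha'.ne']
      have hca : coder q a = (a ^ (q - 1) - 1) / (1 - q) := coder_eq_aux q a hq1 ha'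
      have haa : a * a ^ (q - 1) = a ^ q := by
        rw [Real.rpow_sub ha', Real.rpow_one]; field_simp
      have hbb : b * b ^ (q - 1) = b ^ q := by
        rw [Real.rpow_sub hb, Real.rpow_one]; field_simp
      rw [hcb, hca]
      have hq1' : (1:ℝ) - q ≠ 0 := by
        intro h; apply hq1; linarith
      have hkey : inter q a b * ((b ^ (q - 1) - 1) / (1 - q))
          - (a - b + a * ((a ^ (q - 1) - 1) / (1 - q)))
          = (q * a * b ^ (q - 1) + (1 - q) * b ^ q - a ^ q) / (1 - q) := by
        simp only [inter]
        field_simp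
        nlinarith [haa, hbb]
      rw [← sub_nonneg, hkey]
      rcases lt_or_gt_of_ne hq1 with hlt | hgt
      · apply div_nonneg _ (by linarith)
        nlinarith [bern_lt q a b hq hlt ha'.le hb]
      · apply div_nonneg_of_nonpos _ (by linarith)
        nlinarith [bern_gt q a b hgt ha'.le hb]

/-- For `q > 0`, probability vectors `x` and `y` with `y` strictly
positive, one has `Φ_q(x,y) ≥ H_q(x)`, equivalently `D_q(x,y) ≥ 0`. -/
theorem stmt_8 (q : ℝ) (hq : 0 < q) (n : ℕ) (x y : Fin n → ℝ)
    (hx0 : ∀ i, 0 ≤ x i) (hx1 : ∑ i, x i = 1)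
    (hy0 : ∀ i, 0 < y i) (hy1 : ∑ i, y i = 1) :
    entropy q x ≤ complexity q x y := by
  have h : ∀ i, x i - y i + (if x i = 0 then 0 else x i * coder q (x i))
      ≤ inter q (x i) (y i) * coder q (y i) := fun i =>
    term_key q (x i) (y i) hq (hx0 i) (hy0 i)
  have hsum := Finset.sum_le_sum (fun i (_ : i ∈ Finset.univ) => h i)
  simp only [Finset.sum_add_distrib, Finset.sum_sub_distrib, hx1, hy1] at hsum
  unfold entropy complexity
  linarith [hsum]
end

section
/- Fix a real q > 0. For every finite index set A, every probability vector x = (x_i)_{i∈A} and every probability vector y = (y_i)_{i∈A} with y_i > 0 for all i ∈ A, one has D_q(x,y) = 0 if and only if x_i = y_i for all i ∈ A. Consequently, the function y ↦ Φ_q(x,y), over strictly positive probability vectors y, attains its minimum value H_q(x) uniquely at y = x. -/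
open Real

/-- tangent-line inequality for `t ↦ t ^ q`. -/
lemma tangent_pos {q x y : ℝ} (hq : 0 < q) (hq1 : q ≠ 1) (hx : 0 ≤ x) (hy : 0 < y)
    (hxy : x ≠ y) :
    0 < (q * x * y ^ (q - 1) + (1 - q) * y ^ q - x ^ q) / (1 - q) := by
  set s : ℝ := x / y - 1 with hs_def
  have hs : -1 ≤ s := by
    have : 0 ≤ x / y := div_nonneg hx hy.le
    simp only [hs_def]; linarith
  have hs' : s ≠ 0 := by
    simp only [hs_def, sub_ne_zero]
    intro h
    exact hxy (by field_simp at h; linarith)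
  have h1s : 1 + s = x / y := by simp [hs_def]
  have hyq : 0 < y ^ q := rpow_pos_of_pos hy q
  have hxq : x ^ q = (1 + s) ^ q * y ^ q := by
    rw [h1s, div_rpow hx hy.le, div_mul_cancel₀]
    exact hyq.ne'
  have hxy1 : x * y ^ (q - 1) = (1 + s) * y ^ q := by
    rw [h1s, rpow_sub hy, rpow_one]
    field_simp
  rcases lt_or_gt_of_ne hq1 with h | h
  · have hb := rpow_one_add_lt_one_add_mul_self hs hs' hq h
    apply div_pos _ (by linarith)
    have hmul : (1 + s) ^ q * y ^ q < (1 + q * s) * y ^ q :=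
      mul_lt_mul_of_pos_right hb hyq
    rw [hxq]; nlinarith [hxy1]
  · have hb := one_add_mul_self_lt_rpow_one_add hs hs' h
    have hnum : q * x * y ^ (q - 1) + (1 - q) * y ^ q - x ^ q < 0 := by
      have hmul : (1 + q * s) * y ^ q < (1 + s) ^ q * y ^ q :=
        mul_lt_mul_of_pos_right hb hyq
      rw [hxq]; nlinarith [hxy1]
    exact div_pos_of_neg_of_neg hnum (by linarith)

/-- per-term equality case. -/
lemma key_eq (q : ℝ) {y : ℝ} (hy : 0 < y) :
    inter q y y * coder q y - (if y = 0 then 0 else y * coder q y) = 0 := by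
  rw [if_neg hy.ne']
  unfold inter
  ring

/-- per-term strict inequality. -/
lemma key_lt {q x y : ℝ} (hq : 0 < q) (hx : 0 ≤ x) (hy : 0 < y) (hxy : x ≠ y) :
    x - y < inter q x y * coder q y - (if x = 0 then 0 else x * coder q x) := by
  by_cases hq1 : q = 1
  · subst hq1
    have hcod : ∀ z : ℝ, coder 1 z = -Real.log z := by
      intro z
      simp [coder, qlog, Real.log_inv, one_div]
    simp only [hcod, inter]
    rcases eq_or_lt_of_le hx with h0 | h0
    · rw [if_pos h0.symm]
      rw [← h0]
      ring_nf
      linarith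
    · rw [if_neg h0.ne']
      have hlog : Real.log (y / x) < y / x - 1 :=
        Real.log_lt_sub_one_of_pos (div_pos hy h0) (by
          intro h
          exact hxy (by field_simp at h; linarith))
      have h2 : x * Real.log (y / x) < y - x := by
        have hm := mul_lt_mul_of_pos_left hlog h0
        have hfx : x * (y / x - 1) = y - x := by field_simp
        linarith [hfx ▸ hm]
      rw [Real.log_div hy.ne' h0.ne'] at h2
      nlinarith
  · have h1q : (1 : ℝ) - q ≠ 0 := sub_ne_zero.mpr fun h => hq1 (by linarith)
    have hc : ∀ z : ℝ, 0 < z → coder q z = (z ^ (q - 1) - 1) / (1 - q) := by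
      intro z hz
      simp only [coder, qlog, if_neg hq1, one_div]
      rw [Real.inv_rpow hz.le, ← Real.rpow_neg hz.le, neg_sub]
    have hyq1 : y * y ^ (q - 1) = y ^ q := by
      rw [Real.rpow_sub hy, Real.rpow_one]; field_simp
    rcases eq_or_lt_of_le hx with h0 | h0
    · rw [if_pos h0.symm]
      have hiv : inter q x y * coder q y = y ^ q - y := by
        rw [hc y hy, ← hyq1, ← h0]
        unfold inter
        field_simp
        ring
      rw [hiv]
      have := rpow_pos_of_pos hy q
      linarith
    · rw [if_neg h0.ne']
      have hxq1 : x * x ^ (q - 1) = x ^ q := by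
        rw [Real.rpow_sub h0, Real.rpow_one]; field_simp
      have hT := tangent_pos hq hq1 hx hy hxy
      rw [← hyq1, ← hxq1] at hT
      rw [hc y hy, hc x h0]
      have hkey : inter q x y * ((y ^ (q - 1) - 1) / (1 - q))
          - x * ((x ^ (q - 1) - 1) / (1 - q)) - (x - y)
          = (q * x * y ^ (q - 1) + (1 - q) * (y * y ^ (q - 1)) - x * x ^ (q - 1)) / (1 - q) := by
        unfold inter
        field_simp
        ring
      linarith
/-- per-term weak inequality. -/
lemma key_le {q x y : ℝ} (hq : 0 < q) (hx : 0 ≤ x) (hy : 0 < y) :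
    x - y ≤ inter q x y * coder q y - (if x = 0 then 0 else x * coder q x) := by
  rcases eq_or_ne x y with rfl | h
  · rw [key_eq q hy]; simp
  · exact (key_lt hq hx hy h).le

/-- For `q > 0`, probability vectors `x` and `y` with `y` strictly
positive: `D_q(x,y) = 0` iff `x = y`; consequently `y ↦ Φ_q(x,y)` attains its
minimum value `H_q(x)` uniquely at `y = x`. -/
theorem stmt_9 (q : ℝ) (hq : 0 < q) (n : ℕ) (x : Fin n → ℝ)
    (hx0 : ∀ i, 0 ≤ x i) (hx1 : ∑ i, x i = 1) :
    ∀ y : Fin n → ℝ, (∀ i, 0 < y i) → (∑ i, y i = 1) →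
      (diverg q x y = 0 ↔ x = y) ∧
      entropy q x ≤ complexity q x y ∧
      (complexity q x y = entropy q x ↔ x = y) := by
  intro y hy0 hy1
  have hdiv : diverg q x y = ∑ i, (inter q (x i) (y i) * coder q (y i)
      - (if x i = 0 then 0 else x i * coder q (x i))) := by
    unfold diverg complexity entropy
    rw [Finset.sum_sub_distrib]
  have hsum0 : ∑ i, (x i - y i) = 0 := by
    rw [Finset.sum_sub_distrib, hx1, hy1]; ring
  have hge : ∀ i ∈ Finset.univ, x i - y i ≤ inter q (x i) (y i) * coder q (y i)
      - (if x i = 0 then 0 else x i * coder q (x i)) :=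
    fun i _ => key_le hq (hx0 i) (hy0 i)
  have hD : 0 ≤ diverg q x y := by
    have hs := Finset.sum_le_sum hge
    rw [hdiv]
    linarith [hsum0]
  have hiff : diverg q x y = 0 ↔ x = y := by
    constructor
    · intro h
      by_contra hne
      obtain ⟨i, hi⟩ := Function.ne_iff.mp hne
      have hlt : ∑ j, (x j - y j) < ∑ j, (inter q (x j) (y j) * coder q (y j)
          - (if x j = 0 then 0 else x j * coder q (x j))) :=
        Finset.sum_lt_sum hge ⟨i, Finset.mem_univ i, key_lt hq (hx0 i) (hy0 i) hi⟩
      rw [hsum0, ← hdiv, h] at hlt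
      exact lt_irrefl 0 hlt
    · intro h
      subst h
      rw [hdiv]
      apply Finset.sum_eq_zero
      intro i _
      exact key_eq q (hy0 i)
  refine ⟨hiff, by unfold diverg at hD; linarith, ?_⟩
  rw [← hiff]
  unfold diverg
  constructor <;> intro h <;> linarith
end

section
/- For every real q < 0, the variational principle fails for the pair (π_q, κ_q): there exist a finite index set A, a probability vector x = (x_i)_{i∈A}, and a probability vector y = (y_i)_{i∈A} with y_i > 0 for all i, such that ∑_{i∈A} π_q(x_i, y_i) κ_q(y_i) < ∑_{i∈A} x_i κ_q(x_i), i.e., Φ_q(x,y) < H_q(x). -/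
/-- For every real `q < 0` the variational principle fails for
`(π_q, κ_q)`: there are probability vectors `x` and `y`, with `y` strictly
positive, such that `Φ_q(x,y) < H_q(x)`. -/
theorem stmt_11 (q : ℝ) (hq : q < 0) :
    ∃ (n : ℕ) (x y : Fin n → ℝ),
      (∀ i, 0 ≤ x i) ∧ (∑ i, x i = 1) ∧
      (∀ i, 0 < y i) ∧ (∑ i, y i = 1) ∧
      complexity q x y < entropy q x := by
  have hq1 : q ≠ 1 := by linarith
  obtain ⟨s, hsdef⟩ : ∃ s : ℝ, s = 1 - q := ⟨_, rfl⟩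
  have hs1 : 1 < s := by rw [hsdef]; linarith
  have hs0 : 0 < s := by linarith
  obtain ⟨P, hPdef⟩ : ∃ P : ℝ, P = (2 : ℝ) ^ s := ⟨_, rfl⟩
  have hP : 0 < P := hPdef ▸ Real.rpow_pos_of_pos (by norm_num) s
  obtain ⟨M, hMdef⟩ : ∃ M : ℝ, M = 1 + s * P / (s - 1) := ⟨_, rfl⟩
  have hM1 : 1 < M := by
    have h : 0 < s * P / (s - 1) := div_pos (mul_pos hs0 hP) (by linarith)
    linarith
  obtain ⟨ε, hεdef⟩ : ∃ e : ℝ, e = min ((s - 1) / (2 * s)) (1 / (2 * M)) := ⟨_, rfl⟩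
  have hε0 : 0 < ε := by
    rw [hεdef]
    exact lt_min (div_pos (by linarith) (by linarith)) (div_pos one_pos (by linarith))
  have hεM : ε ≤ 1 / (2 * M) := hεdef ▸ min_le_right _ _
  have hεhalf : ε ≤ 1 / 2 := by
    have h1 : 1 / (2 * M) ≤ 1 / 2 := by
      apply one_div_le_one_div_of_le <;> linarith
    linarith
  have hε1 : ε < 1 := by linarith
  have hεs : s * ε ≤ (s - 1) / 2 := by
    have h : ε ≤ (s - 1) / (2 * s) := hεdef ▸ min_le_left _ _
    calc s * ε ≤ s * ((s - 1) / (2 * s)) := by nlinarith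
    _ = (s - 1) / 2 := by field_simp
  have h2M : 2 * M ≤ 1 / ε := by
    rw [le_div_iff₀ hε0]
    have hM0 : 0 < 2 * M := by linarith
    calc 2 * M * ε ≤ 2 * M * (1 / (2 * M)) :=
      mul_le_mul_of_nonneg_left hεM (by linarith)
    _ = 1 := by field_simp
  refine ⟨2, ![0, 1], ![1 - ε, ε], ?_, ?_, ?_, ?_, ?_⟩
  · intro i; fin_cases i <;> norm_num
  · simp [Fin.sum_univ_two]
  · intro i; fin_cases i <;> simp <;> linarith
  · simp [Fin.sum_univ_two]
  -- entropy = 0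
  have hent : entropy q ![0, 1] = 0 := by
    norm_num [entropy, Fin.sum_univ_two, coder, qlog, hq1, Real.one_rpow]
  rw [hent]
  -- rewrite complexity
  have h1ε : (0:ℝ) < 1 - ε := by linarith
  have hr1 : (1 / (1 - ε)) ^ s = ((1 - ε) ^ s)⁻¹ := by
    rw [one_div, ← Real.inv_rpow h1ε.le]
  have hr2 : (1 / ε) ^ s = (ε ^ s)⁻¹ := by
    rw [one_div, ← Real.inv_rpow hε0.le]
  have hcomp : complexity q ![0, 1] ![1 - ε, ε]
      = (1 - ε) * (((1 - ε) ^ s)⁻¹ - 1) + (q + s * ε) * (((ε ^ s)⁻¹ - 1) / s) := by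
    simp only [complexity, inter, coder, qlog, Fin.sum_univ_two, if_neg hq1,
      Matrix.cons_val_zero, Matrix.cons_val_one, Matrix.head_cons, ← hsdef, hr1, hr2]
    have hsne : s ≠ 0 := ne_of_gt hs0
    field_simp
    ring
  rw [hcomp]
  -- bounds
  have hAp : (0:ℝ) < (1 - ε) ^ s := Real.rpow_pos_of_pos h1ε s
  have hhalf : ((2:ℝ)⁻¹) ^ s ≤ (1 - ε) ^ s :=
    Real.rpow_le_rpow (by norm_num) (by linarith) hs0.le
  have hinv2 : ((2:ℝ)⁻¹) ^ s = P⁻¹ := by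
    rw [hPdef, Real.inv_rpow (by norm_num : (0:ℝ) ≤ 2)]
  have hA : ((1 - ε) ^ s)⁻¹ ≤ P := by
    have h0 : (0:ℝ) < ((2:ℝ)⁻¹) ^ s := Real.rpow_pos_of_pos (by norm_num) s
    have := inv_anti₀ h0 hhalf
    rw [hinv2, inv_inv] at this
    exact this
  have hterm1 : (1 - ε) * (((1 - ε) ^ s)⁻¹ - 1) ≤ P - (1 - ε) := by
    have h1 : (1 - ε) * ((1 - ε) ^ s)⁻¹ ≤ 1 * P := by
      apply mul_le_mul (by linarith) hA (by positivity) (by norm_num)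
    nlinarith
  have hεs1 : ε ^ s ≤ ε := by
    have := Real.rpow_le_rpow_of_exponent_ge hε0 hε1.le (by linarith : (1:ℝ) ≤ s)
    rwa [Real.rpow_one] at this
  have hεsp : (0:ℝ) < ε ^ s := Real.rpow_pos_of_pos hε0 s
  have hB : 2 * M ≤ (ε ^ s)⁻¹ := by
    have := inv_anti₀ hεsp hεs1
    rw [← one_div] at this
    linarith
  have hT0 : (0:ℝ) < (ε ^ s)⁻¹ - 1 := by nlinarith [hB, hM1]
  have hc : q + s * ε ≤ -((s - 1) / 2) := by
    have h : q = 1 - s := by rw [hsdef]; ring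
    linarith
  have hterm2 : (q + s * ε) * (((ε ^ s)⁻¹ - 1) / s)
      ≤ -((s - 1) / 2) * ((2 * M - 1) / s) := by
    have hTs : (2 * M - 1) / s ≤ ((ε ^ s)⁻¹ - 1) / s := by
      gcongr <;> linarith
    have hTs0 : 0 ≤ ((ε ^ s)⁻¹ - 1) / s := div_nonneg (by linarith) hs0.le
    calc (q + s * ε) * (((ε ^ s)⁻¹ - 1) / s)
        ≤ -((s - 1) / 2) * (((ε ^ s)⁻¹ - 1) / s) :=
          mul_le_mul_of_nonneg_right hc hTs0
      _ ≤ -((s - 1) / 2) * ((2 * M - 1) / s) := by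
          apply mul_le_mul_of_nonpos_left hTs
          linarith
  have hkey : -((s - 1) / 2) * ((2 * M - 1) / s) = -((s - 1) / (2 * s) + P) := by
    rw [hMdef]
    have hsne : s ≠ 0 := ne_of_gt hs0
    have hs1ne : s - 1 ≠ 0 := by linarith
    field_simp
    ring
  rw [hkey] at hterm2
  have hpos : 0 < (s - 1) / (2 * s) := div_pos (by linarith) (by linarith)
  linarith
end

section
/- Fix a real q > 0 and a finite index set A. For every probability vector x = (x_i)_{i∈A}, the infimum of Φ_q(x,y) over all probability vectors y = (y_i)_{i∈A} with y_i > 0 for all i equals H_q(x) = ∑_{i∈A} x_i ln_q(1/x_i), provided x_i > 0 for all i (in which case the infimum is attained at y = x). -/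

lemma coder_eq_of_ne {q t : ℝ} (ht : 0 < t) (hq1 : q ≠ 1) :
    coder q t = (t ^ (q - 1) - 1) / (1 - q) := by
  unfold coder qlog
  rw [if_neg hq1, one_div, Real.inv_rpow ht.le, ← Real.rpow_neg ht.le, neg_sub]

lemma key {q x y : ℝ} (hq : 0 < q) (hx : 0 < x) (hy : 0 < y) :
    x - y + x * coder q x ≤ inter q x y * coder q y := by
  by_cases hq1 : q = 1
  · subst hq1
    have hcx : coder 1 x = -Real.log x := by
      unfold coder qlog; rw [if_pos rfl, one_div, Real.log_inv]
    have hcy : coder 1 y = -Real.log y := by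
      unfold coder qlog; rw [if_pos rfl, one_div, Real.log_inv]
    have hlog : Real.log (y / x) ≤ y / x - 1 := Real.log_le_sub_one_of_pos (div_pos hy hx)
    rw [Real.log_div hy.ne' hx.ne'] at hlog
    have hmul : x * (Real.log y - Real.log x) ≤ x * (y / x - 1) :=
      mul_le_mul_of_nonneg_left hlog hx.le
    have hx' : x * (y / x - 1) = y - x := by field_simp
    rw [hcx, hcy]
    unfold inter
    nlinarith [hmul, hx']
  · have h1q : (1 : ℝ) - q ≠ 0 := by
      intro h; apply hq1; linarith [sub_eq_zero.mp h]
    rw [coder_eq_of_ne hx hq1, coder_eq_of_ne hy hq1]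
    have hxa : x * x ^ (q - 1) = x ^ q := by
      rw [show q = 1 + (q - 1) by ring, Real.rpow_add hx, Real.rpow_one]
      ring_nf
    have hyb : y * y ^ (q - 1) = y ^ q := by
      rw [show q = 1 + (q - 1) by ring, Real.rpow_add hy, Real.rpow_one]
      ring_nf
    have expand : inter q x y * ((y ^ (q - 1) - 1) / (1 - q)) -
        (x - y + x * ((x ^ (q - 1) - 1) / (1 - q))) =
        (q * (x * y ^ (q - 1)) + (1 - q) * (y * y ^ (q - 1)) - x * x ^ (q - 1)) / (1 - q) := by
      unfold inter; field_simp; ring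
    rw [hxa, hyb] at expand
    have hnum : 0 ≤ (q * (x * y ^ (q - 1)) + (1 - q) * y ^ q - x ^ q) / (1 - q) := by
      rcases lt_or_gt_of_ne hq1 with hlt | hgt
      · -- q < 1 : AM-GM
        have geq : (x * y ^ (q - 1)) ^ q * (y ^ q) ^ (1 - q) = x ^ q := by
          rw [Real.mul_rpow hx.le (Real.rpow_nonneg hy.le _), ← Real.rpow_mul hy.le,
            ← Real.rpow_mul hy.le, mul_assoc, ← Real.rpow_add hy,
            show (q - 1) * q + q * (1 - q) = 0 by ring, Real.rpow_zero, mul_one]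
        have amgm := Real.geom_mean_le_arith_mean2_weighted (w₁ := q) (w₂ := 1 - q)
          (p₁ := x * y ^ (q - 1)) (p₂ := y ^ q) hq.le (by linarith)
          (mul_nonneg hx.le (Real.rpow_nonneg hy.le _)) (Real.rpow_nonneg hy.le _)
          (by ring)
        rw [geq] at amgm
        apply div_nonneg (by linarith) (by linarith)
      · -- q > 1 : Bernoulli
        have hs : (-1 : ℝ) ≤ x / y - 1 := by
          have := div_pos hx hy; linarith
        have bern := one_add_mul_self_le_rpow_one_add hs hgt.le
        rw [show (1 : ℝ) + (x / y - 1) = x / y by ring, Real.div_rpow hx.le hy.le] at bern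
        have hyq : (0 : ℝ) < y ^ q := Real.rpow_pos_of_pos hy q
        have hcross : (1 + q * (x / y - 1)) * y ^ q ≤ x ^ q / y ^ q * y ^ q :=
          mul_le_mul_of_nonneg_right bern hyq.le
        have e1 : x ^ q / y ^ q * y ^ q = x ^ q := by field_simp
        have e2 : x / y * y ^ q = x * y ^ (q - 1) := by
          rw [← hyb]; field_simp
        have hnum' : q * (x * y ^ (q - 1)) + (1 - q) * y ^ q - x ^ q ≤ 0 := by
          nlinarith [hcross, e1, e2]
        exact div_nonneg_of_nonpos hnum' (by linarith)
    linarith [expand ▸ hnum]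

/-- For `q > 0` and a strictly positive probability vector `x`, the
infimum of `Φ_q(x,y)` over strictly positive probability vectors `y` equals
`H_q(x) = ∑ i, x i · ln_q (1/(x i))`, and it is attained (at `y = x`), i.e.
`H_q(x)` is the least element of the set of achievable complexities. -/
theorem stmt_14 (q : ℝ) (hq : 0 < q) (n : ℕ) (x : Fin n → ℝ)
    (hx0 : ∀ i, 0 < x i) (hx1 : ∑ i, x i = 1) :
    IsLeast {c : ℝ | ∃ y : Fin n → ℝ,
        (∀ i, 0 < y i) ∧ (∑ i, y i = 1) ∧ complexity q x y = c}
      (∑ i, x i * qlog q (1 / x i)) := by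
  constructor
  · refine ⟨x, hx0, hx1, ?_⟩
    unfold complexity inter coder
    exact Finset.sum_congr rfl fun i _ => by ring
  · rintro c ⟨y, hy0, hy1, rfl⟩
    have hsum : ∑ i, (x i - y i + x i * coder q (x i)) ≤ complexity q x y :=
      Finset.sum_le_sum fun i _ => key hq (hx0 i) (hy0 i)
    have heq : ∑ i, (x i - y i + x i * coder q (x i)) = ∑ i, x i * qlog q (1 / x i) := by
      rw [Finset.sum_add_distrib, Finset.sum_sub_distrib, hx1, hy1]
      simp [coder]
    linarith
end
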